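/- Let {H_n} be a Positive Linear Recurrence Sequence with length L and size S. Suppose E[K_r] = a·r + b + f(r) for all r > L, where a > 0, b are constants and f(r) → 0 as r → ∞. Define Y_n(ω) = Z_n(ω) + f(n − L_n(ω)) − a·L_n(ω) for n > 2L. Then there exists N > 2L such that for all n > N, Var[Y_n] > a²/(2S). -/

import Mathlib

open scoped BigOperators
open Filter

/-- A Positive Linear Recurrence Sequence (PLRS): a sequence `H` of positive integers
satisfying `H (n+1) = c 1 * H n + ⋯ + c L * H (n+1-L)` for `n ≥ L`, with
`H 1 = 1` and initial conditions `H (n+1) = c 1 * H n + ⋯ + c n * H 1 + 1` for `1 ≤ n < L`. -/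
structure PLRS where
  /-- the length of the recurrence -/
  L : ℕ
  /-- the coefficients of the recurrence (indexed from 1) -/
  c : ℕ → ℕ
  /-- the sequence itself (indexed from 1) -/
  H : ℕ → ℕ
  L_pos : 0 < L
  c1_pos : 0 < c 1
  cL_pos : 0 < c L
  H_pos : ∀ n, 1 ≤ n → 0 < H n
  H_one : H 1 = 1
  H_rec : ∀ n, L ≤ n → H (n + 1) = ∑ i ∈ Finset.Icc 1 L, c i * H (n + 1 - i)
  H_init : ∀ n, 1 ≤ n → n < L → H (n + 1) = (∑ i ∈ Finset.Icc 1 n, c i * H (n + 1 - i)) + 1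

namespace PLRS

/-- The size `S = c 1 + ⋯ + c L` of a PLRS. -/
def size (P : PLRS) : ℕ := ∑ i ∈ Finset.Icc 1 P.L, P.c i

/-- Legality of a coefficient sequence `(a_1, …, a_m)` (as a list), not including the
requirement `a_1 > 0`: either (Condition 1) `m < L` and `a_i = c_i` for all `i`, or
(Condition 2) there is `s ∈ {1, …, L}` with `a_1 = c_1, …, a_{s-1} = c_{s-1}`, `a_s < c_s`,
and `(a_{s+1}, …, a_m)` legal (possibly empty). -/
inductive IsLegal (P : PLRS) : List ℕ → Prop
  | cond1 (m : ℕ) (h1 : 1 ≤ m) (h2 : m < P.L) :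
      IsLegal P ((List.range m).map fun i => P.c (i + 1))
  | cond2 (s : ℕ) (hs1 : 1 ≤ s) (hs2 : s ≤ P.L) (a : ℕ) (ha : a < P.c s)
      (rest : List ℕ) (hrest : IsLegal P rest) :
      IsLegal P (((List.range (s - 1)).map fun i => P.c (i + 1)) ++ a :: rest)
  | cond2_last (s : ℕ) (hs1 : 1 ≤ s) (hs2 : s ≤ P.L) (a : ℕ) (ha : a < P.c s) :
      IsLegal P (((List.range (s - 1)).map fun i => P.c (i + 1)) ++ [a])

/-- A legal decomposition: a legal coefficient sequence with `a_1 > 0`. -/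
def LegalDecomp (P : PLRS) (l : List ℕ) : Prop := P.IsLegal l ∧ 0 < l.headI

/-- The value `∑_{i=1}^m a_i H_{m+1-i}` of a coefficient sequence `(a_1, …, a_m)`. -/
def value (P : PLRS) (l : List ℕ) : ℕ :=
  ∑ i ∈ Finset.range l.length, l.getD i 0 * P.H (l.length - i)

/-- `Ω_n`: the set of legal decompositions of integers in `[H_n, H_{n+1})`. -/
def Omega (P : PLRS) (n : ℕ) : Set (List ℕ) :=
  {l | P.LegalDecomp l ∧ P.H n ≤ P.value l ∧ P.value l < P.H (n + 1)}

/-- Expectation of `g` under the uniform probability measure on a (finite) set `A`. -/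
noncomputable def expectOn (A : Set (List ℕ)) (g : List ℕ → ℝ) : ℝ :=
  (∑ᶠ l ∈ A, g l) / (A.ncard : ℝ)

/-- Variance of `g` under the uniform probability measure on a (finite) set `A`. -/
noncomputable def varOn (A : Set (List ℕ)) (g : List ℕ → ℝ) : ℝ :=
  expectOn A (fun l => g l ^ 2) - (expectOn A g) ^ 2

/-- Expectation of `g` under the uniform probability measure on `Ω_n`. -/
noncomputable def expect (P : PLRS) (n : ℕ) (g : List ℕ → ℝ) : ℝ := expectOn (P.Omega n) g

/-- Probability of the event `A` under the uniform probability measure on `Ω_n`. -/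
noncomputable def prob (P : PLRS) (n : ℕ) (A : Set (List ℕ)) : ℝ :=
  ((P.Omega n ∩ A).ncard : ℝ) / ((P.Omega n).ncard : ℝ)

/-- `E[K_n]`, the expected number of summands on `Ω_n`. -/
noncomputable def expectK (P : PLRS) (n : ℕ) : ℝ := P.expect n fun l => (l.sum : ℝ)

/-- `Var[K_n]`, the variance of the number of summands on `Ω_n`. -/
noncomputable def varK (P : PLRS) (n : ℕ) : ℝ := varOn (P.Omega n) fun l => (l.sum : ℝ)

/-- The first index (0-based) at which the coefficient list disagrees with `c`. -/
def firstMismatch (P : PLRS) (l : List ℕ) : Option ℕ :=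
  (List.range l.length).find? fun i => l.getD i 0 != P.c (i + 1)

/-- The block decomposition of a legal coefficient sequence: repeatedly split off the
Type 2 block `(c_1, …, c_{s-1}, a_s)` with `a_s ≠ c_s`; if the whole remaining sequence
agrees with `c` it is a single (Type 1) block. -/
def blocks (P : PLRS) (l : List ℕ) : List (List ℕ) :=
  if h : l = [] then []
  else
    match P.firstMismatch l with
    | none => [l]
    | some i => l.take (i + 1) :: P.blocks (l.drop (i + 1))
termination_by l.length
decreasing_by
  have hl : 0 < l.length := List.length_pos_iff.mpr h
  simp only [List.length_drop]
  omega

/-- The second-to-last block of a legal decomposition. -/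
def stlBlock (P : PLRS) (l : List ℕ) : List ℕ := ((P.blocks l).reverse).getD 1 []

/-- `Z_n(ω)`: the size (sum of coefficients) of the second-to-last block. -/
def Z (P : PLRS) (l : List ℕ) : ℕ := (P.stlBlock l).sum

/-- The length function `ℓ(t)`: the length of the Type 2 block of size `t`, i.e., the least
`s` with `t < c_1 + ⋯ + c_s`. -/
noncomputable def ell (P : PLRS) (t : ℕ) : ℕ :=
  sInf {s : ℕ | t < ∑ i ∈ Finset.Icc 1 s, P.c i}

/-- `L_n(ω) = ℓ(Z_n(ω))`: the length of the second-to-last block. -/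
noncomputable def Lfn (P : PLRS) (l : List ℕ) : ℕ := P.ell (P.Z l)

/-- `h_t`: remove the second-to-last block of a legal decomposition. -/
def removeSTL (P : PLRS) (l : List ℕ) : List ℕ :=
  ((((P.blocks l).reverse).eraseIdx 1).reverse).flatten

/-- The Type 2 block of size `t`: `(c_1, …, c_{ℓ(t)-1}, t - (c_1 + ⋯ + c_{ℓ(t)-1}))`. -/
noncomputable def type2Block (P : PLRS) (t : ℕ) : List ℕ :=
  ((List.range (P.ell t - 1)).map fun i => P.c (i + 1)) ++
    [t - ∑ i ∈ Finset.Icc 1 (P.ell t - 1), P.c i]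

/-- Insert the Type 2 block of size `t` immediately before the last block. -/
noncomputable def insertSTL (P : PLRS) (t : ℕ) (l : List ℕ) : List ℕ :=
  ((((P.blocks l).reverse).insertIdx 1 (P.type2Block t)).reverse).flatten

/-- A Type 1 block: `(c_1, …, c_m)` with `1 ≤ m < L`. -/
def IsType1Block (P : PLRS) (bl : List ℕ) : Prop :=
  ∃ m, 1 ≤ m ∧ m < P.L ∧ bl = (List.range m).map fun i => P.c (i + 1)

/-- A Type 2 block: `(c_1, …, c_{s-1}, a)` with `1 ≤ s ≤ L` and `a < c_s`. -/
def IsType2Block (P : PLRS) (bl : List ℕ) : Prop :=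
  ∃ s, 1 ≤ s ∧ s ≤ P.L ∧ ∃ a, a < P.c s ∧
    bl = ((List.range (s - 1)).map fun i => P.c (i + 1)) ++ [a]

/-- Conditional expectation of `g` on `Ω_n` given `Z_n = t`. -/
noncomputable def condExpect (P : PLRS) (n t : ℕ) (g : List ℕ → ℝ) : ℝ :=
  expectOn (P.Omega n ∩ {l | P.Z l = t}) g

end PLRS

open PLRS

/-!
For `n > 2L` every `ω ∈ Ω_n` has at least three blocks, and removing the second-to-last block
(`h_t`), inverted by inserting the Type 2 block of size `t`, is a bijection from `{Z_n = t}` onto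
`Ω_{n - ℓ(t)}`. So `Y_n` is a function of `Z_n` with `P(Z_n = t) = #Ω_{n - ℓ(t)} / #Ω_n`, and the
hypothesis on `E[K_r]`, applied on each fiber, gives `E[Y_n] = f n`. Since `ℓ(0) = 1` and `#Ω_m`
is nondecreasing, `t = 0` carries the largest weight, hence `P(Z_n = 0) ≥ 1/S` and
`Var[Y_n] ≥ (f (n - 1) - a)² / S - f(n)² → a² / S`. The hypothesis also forces `Ω_n ≠ ∅` for
large `n` (as `E[K_n] → ∞`), which rules out the degenerate sequence with `S = 1`.
-/

lemma List.reverse_insertIdx_one_reverse_concat {α : Type*} (init : List α) (B z : α) :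
    ((init ++ [z]).reverse.insertIdx 1 B).reverse = init ++ [B, z] := by
  simp [List.insertIdx_succ_cons]

lemma List.reverse_eraseIdx_one_reverse_concat {α : Type*} (init : List α) (y z : α) :
    ((init ++ [y, z]).reverse.eraseIdx 1).reverse = init ++ [z] := by
  simp

lemma sq_div_card_le_sum_mul_sq_div_sum {ι : Type*} {s : Finset ι} {w y : ι → ℝ} {i₀ : ι}
    (hi₀ : i₀ ∈ s) (hw : ∀ i ∈ s, 0 ≤ w i) (hmax : ∀ i ∈ s, w i ≤ w i₀)
    (hpos : 0 < ∑ i ∈ s, w i) :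
    y i₀ ^ 2 / s.card ≤ (∑ i ∈ s, w i * y i ^ 2) / ∑ i ∈ s, w i := by
  have hcard : (0 : ℝ) < s.card := by exact_mod_cast Finset.card_pos.mpr ⟨i₀, hi₀⟩
  have hW : ∑ i ∈ s, w i ≤ s.card * w i₀ := by
    simpa using Finset.sum_le_card_nsmul s w (w i₀) hmax
  have hsq : w i₀ * y i₀ ^ 2 ≤ ∑ i ∈ s, w i * y i ^ 2 :=
    Finset.single_le_sum (f := fun i => w i * y i ^ 2)
      (fun i hi => mul_nonneg (hw i hi) (sq_nonneg _)) hi₀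
  rw [div_le_div_iff₀ hcard hpos]
  nlinarith [sq_nonneg (y i₀)]

namespace PLRS

variable (P : PLRS)

lemma expectOn_coe_finset (s : Finset (List ℕ)) (g : List ℕ → ℝ) :
    expectOn s g = (∑ l ∈ s, g l) / s.card := by
  rw [expectOn, finsum_mem_coe_finset, Set.ncard_coe_finset]

lemma sum_eq_card_mul_expectOn (s : Finset (List ℕ)) (g : List ℕ → ℝ) :
    ∑ l ∈ s, g l = s.card * expectOn s g := by
  rcases s.eq_empty_or_nonempty with rfl | hs
  · simp
  · rw [expectOn_coe_finset, mul_div_cancel₀ _ (by simpa using hs.ne_empty)]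

def coeffPrefix (s : ℕ) : List ℕ := (List.range s).map fun i => P.c (i + 1)

def coeffSum (s : ℕ) : ℕ := ∑ i ∈ Finset.Icc 1 s, P.c i

lemma map_range_eq_coeffPrefix (s : ℕ) :
    ((List.range s).map fun i => P.c (i + 1)) = P.coeffPrefix s := rfl

@[simp] lemma length_coeffPrefix (s : ℕ) : (P.coeffPrefix s).length = s := by
  simp [coeffPrefix]

lemma getD_coeffPrefix {s i : ℕ} (h : i < s) : (P.coeffPrefix s).getD i 0 = P.c (i + 1) := by
  simp [coeffPrefix, h]

lemma coeffPrefix_succ (s : ℕ) : P.coeffPrefix (s + 1) = P.coeffPrefix s ++ [P.c (s + 1)] := by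
  simp [coeffPrefix, List.range_succ]

lemma coeffSum_succ (s : ℕ) : P.coeffSum (s + 1) = P.coeffSum s + P.c (s + 1) :=
  Finset.sum_Icc_succ_top (Nat.le_add_left 1 s) _

lemma coeffSum_pred {s : ℕ} (hs : 1 ≤ s) : P.coeffSum s = P.coeffSum (s - 1) + P.c s := by
  obtain ⟨k, rfl⟩ := Nat.exists_eq_add_of_le' hs
  exact P.coeffSum_succ k

lemma coeffSum_mono : Monotone P.coeffSum := fun _ _ h =>
  Finset.sum_le_sum_of_subset (Finset.Icc_subset_Icc le_rfl h)

lemma sum_coeffPrefix (s : ℕ) : (P.coeffPrefix s).sum = P.coeffSum s := by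
  induction s with
  | zero => simp [coeffPrefix, coeffSum]
  | succ k ih => simp [P.coeffPrefix_succ, P.coeffSum_succ, ih]

lemma size_eq_coeffSum : P.size = P.coeffSum P.L := rfl

lemma c_le_size {i : ℕ} (h1 : 1 ≤ i) (h2 : i ≤ P.L) : P.c i ≤ P.size :=
  Finset.single_le_sum (f := P.c) (fun _ _ => Nat.zero_le _) (Finset.mem_Icc.mpr ⟨h1, h2⟩)

lemma size_eq_c_one_of_L_eq_one (h : P.L = 1) : P.size = P.c 1 := by
  simp [size, h]

lemma one_lt_size_of_one_lt_L (hL : 1 < P.L) : 1 < P.size := by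
  have hpair : P.c 1 + P.c P.L ≤ P.size := by
    refine (Finset.sum_pair (f := P.c) hL.ne).symm.le.trans
      (Finset.sum_le_sum_of_subset fun i hi => ?_)
    simp only [Finset.mem_insert, Finset.mem_singleton] at hi
    rcases hi with rfl | rfl <;> simp [Finset.mem_Icc] <;> omega
  have := P.c1_pos
  have := P.cL_pos
  omega

lemma sum_c_mul_H_le {s m : ℕ} (hs : s ≤ P.L) (hsm : s ≤ m) (hm : 1 ≤ m) :
    ∑ i ∈ Finset.Icc 1 s, P.c i * P.H (m + 1 - i) ≤ P.H (m + 1) := by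
  rcases le_or_gt P.L m with h | h
  · rw [P.H_rec m h]
    exact Finset.sum_le_sum_of_subset (Finset.Icc_subset_Icc le_rfl hs)
  · rw [P.H_init m hm h]
    exact le_add_right (Finset.sum_le_sum_of_subset (Finset.Icc_subset_Icc le_rfl hsm))

lemma H_lt_H_succ (hS : 1 < P.size) {m : ℕ} (hm : 1 ≤ m) : P.H m < P.H (m + 1) := by
  have hterm : ∀ i ∈ Finset.Icc 1 m, P.c i * P.H (m + 1 - i) ≤
      ∑ j ∈ Finset.Icc 1 m, P.c j * P.H (m + 1 - j) :=
    fun i hi => Finset.single_le_sum (f := fun j => P.c j * P.H (m + 1 - j))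
      (fun _ _ => Nat.zero_le _) hi
  have hHm : P.H m ≤ P.c 1 * P.H (m + 1 - 1) := by
    simpa using Nat.mul_le_mul_right (P.H m) P.c1_pos
  rcases lt_or_ge m P.L with hmL | hmL
  · rw [P.H_init m hm hmL]
    have := hterm 1 (Finset.mem_Icc.mpr ⟨le_rfl, hm⟩)
    omega
  rw [P.H_rec m hmL]
  rcases Nat.lt_or_ge 1 P.L with hL | hL
  · have hpair : P.c 1 * P.H (m + 1 - 1) + P.c P.L * P.H (m + 1 - P.L) ≤
        ∑ i ∈ Finset.Icc 1 P.L, P.c i * P.H (m + 1 - i) := by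
      refine (Finset.sum_pair (f := fun i => P.c i * P.H (m + 1 - i)) hL.ne).symm.le.trans
        (Finset.sum_le_sum_of_subset fun i hi => ?_)
      simp only [Finset.mem_insert, Finset.mem_singleton] at hi
      rcases hi with rfl | rfl <;> simp [Finset.mem_Icc] <;> omega
    have hlast : 0 < P.c P.L * P.H (m + 1 - P.L) :=
      Nat.mul_pos P.cL_pos (P.H_pos _ (by omega))
    omega
  · have hL1 : P.L = 1 := by have := P.L_pos; omega
    have hc1 : 2 ≤ P.c 1 := P.size_eq_c_one_of_L_eq_one hL1 ▸ hS
    have := P.H_pos m hm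
    simp only [hL1, Finset.Icc_self, Finset.sum_singleton, Nat.add_sub_cancel]
    nlinarith

lemma H_strictMonoOn (hS : 1 < P.size) : StrictMonoOn P.H (Set.Ici 1) := by
  refine strictMonoOn_Ici_of_pred_lt fun m hm => ?_
  have := P.H_lt_H_succ hS (m := m - 1) (by omega)
  rwa [Nat.sub_add_cancel hm.le] at this

lemma blocks_coeffPrefix {m : ℕ} (hm : 1 ≤ m) :
    P.blocks (P.coeffPrefix m) = [P.coeffPrefix m] := by
  have hfm : P.firstMismatch (P.coeffPrefix m) = none := by
    simp +contextual [firstMismatch, coeffPrefix]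
  rw [blocks, dif_neg (List.ne_nil_of_length_pos (by simp; omega)), hfm]

lemma blocks_coeffPrefix_append {s a : ℕ} (hs : 1 ≤ s) (ha : a ≠ P.c s) (r : List ℕ) :
    P.blocks (P.coeffPrefix (s - 1) ++ a :: r) =
      (P.coeffPrefix (s - 1) ++ [a]) :: P.blocks r := by
  have hfm : P.firstMismatch (P.coeffPrefix (s - 1) ++ a :: r) = some (s - 1) := by
    rw [firstMismatch, List.find?_range_eq_some]
    refine ⟨?_, by simp, fun j hj => ?_⟩
    · simpa [List.getD_append_right, Nat.sub_add_cancel hs] using ha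
    · rw [List.getD_append _ _ _ _ (by simpa using hj), P.getD_coeffPrefix hj]
      simp
  rw [blocks, dif_neg (by simp), hfm]
  simp [List.take_append, List.drop_append, List.drop_eq_nil_of_le]

@[simp] lemma blocks_nil : P.blocks [] = [] := by
  rw [blocks, dif_pos rfl]

namespace IsType2Block

variable {P} {b : List ℕ}

lemma ne_nil (hb : P.IsType2Block b) : b ≠ [] := by
  obtain ⟨s, -, -, a, -, rfl⟩ := hb
  simp

lemma length_le (hb : P.IsType2Block b) :
    b.length ≤ P.L := by
  obtain ⟨s, hs1, hs2, a, -, rfl⟩ := hb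
  simp; omega

lemma le_size (hb : P.IsType2Block b) :
    ∀ x ∈ b, x ≤ P.size := by
  obtain ⟨s, hs1, hs2, a, ha, rfl⟩ := hb
  intro x hx
  simp only [List.mem_append, List.mem_map, List.mem_range, List.mem_singleton] at hx
  rcases hx with ⟨i, hi, rfl⟩ | rfl
  · exact P.c_le_size (by omega) (by omega)
  · exact ha.le.trans (P.c_le_size hs1 hs2)

lemma blocks_append (hb : P.IsType2Block b)
    (r : List ℕ) : P.blocks (b ++ r) = b :: P.blocks r := by
  obtain ⟨s, hs1, -, a, ha, rfl⟩ := hb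
  simpa [P.map_range_eq_coeffPrefix] using P.blocks_coeffPrefix_append hs1 ha.ne r

lemma isLegal_append (hb : P.IsType2Block b) {r : List ℕ}
    (hr : P.IsLegal r) : P.IsLegal (b ++ r) := by
  obtain ⟨s, hs1, hs2, a, ha, rfl⟩ := hb
  simpa using IsLegal.cond2 s hs1 hs2 a ha r hr

end IsType2Block

namespace IsType1Block

variable {P} {b : List ℕ}

lemma length_le (hb : P.IsType1Block b) :
    b.length ≤ P.L := by
  obtain ⟨m, -, hm, rfl⟩ := hb
  simp; omega

lemma le_size (hb : P.IsType1Block b) :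
    ∀ x ∈ b, x ≤ P.size := by
  obtain ⟨m, -, hm, rfl⟩ := hb
  simp only [List.mem_map, List.mem_range]
  rintro x ⟨i, hi, rfl⟩
  exact P.c_le_size (by omega) (by omega)


end IsType1Block

def IsBlock (b : List ℕ) : Prop := P.IsType1Block b ∨ P.IsType2Block b

namespace IsBlock

variable {P} {b : List ℕ}

lemma isLegal (hb : P.IsBlock b) : P.IsLegal b := by
  rcases hb with ⟨m, hm1, hm2, rfl⟩ | ⟨s, hs1, hs2, a, ha, rfl⟩
  · exact IsLegal.cond1 m hm1 hm2
  · exact IsLegal.cond2_last s hs1 hs2 a ha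

lemma blocks_eq (hb : P.IsBlock b) : P.blocks b = [b] := by
  rcases hb with ⟨m, hm1, -, rfl⟩ | hb
  · exact P.blocks_coeffPrefix hm1
  · simpa using hb.blocks_append []

lemma length_le (hb : P.IsBlock b) : b.length ≤ P.L :=
  hb.elim IsType1Block.length_le IsType2Block.length_le

lemma le_size (hb : P.IsBlock b) : ∀ x ∈ b, x ≤ P.size :=
  hb.elim IsType1Block.le_size IsType2Block.le_size

end IsBlock

lemma blocks_flatten_append {init : List (List ℕ)} (hinit : ∀ b ∈ init, P.IsType2Block b)
    (r : List ℕ) : P.blocks (init.flatten ++ r) = init ++ P.blocks r := by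
  induction init with
  | nil => simp
  | cons b init ih =>
    rw [List.forall_mem_cons] at hinit
    rw [List.flatten_cons, List.append_assoc, hinit.1.blocks_append, ih hinit.2, List.cons_append]

lemma isLegal_flatten_append {init : List (List ℕ)} (hinit : ∀ b ∈ init, P.IsType2Block b)
    {r : List ℕ} (hr : P.IsLegal r) : P.IsLegal (init.flatten ++ r) := by
  induction init with
  | nil => simpa using hr
  | cons b init ih =>
    rw [List.forall_mem_cons] at hinit
    rw [List.flatten_cons, List.append_assoc]
    exact hinit.1.isLegal_append (ih hinit.2)

lemma IsLegal.exists_eq_flatten_append {P : PLRS} {l : List ℕ} (hl : P.IsLegal l) :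
    ∃ (init : List (List ℕ)) (z : List ℕ), (∀ b ∈ init, P.IsType2Block b) ∧ P.IsBlock z ∧
      l = init.flatten ++ z := by
  induction hl with
  | cond1 m h1 h2 => exact ⟨[], _, by simp, Or.inl ⟨m, h1, h2, rfl⟩, by simp⟩
  | cond2 s hs1 hs2 a ha rest _ ih =>
    obtain ⟨init, z, hinit, hz, rfl⟩ := ih
    refine ⟨(P.coeffPrefix (s - 1) ++ [a]) :: init, z, ?_, hz, by simp [coeffPrefix]⟩
    exact List.forall_mem_cons.mpr ⟨⟨s, hs1, hs2, a, ha, rfl⟩, hinit⟩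
  | cond2_last s hs1 hs2 a ha => exact ⟨[], _, by simp, Or.inr ⟨s, hs1, hs2, a, ha, rfl⟩, by simp⟩

lemma blocks_flatten_append_of_isBlock {init : List (List ℕ)}
    (hinit : ∀ b ∈ init, P.IsType2Block b) {z : List ℕ} (hz : P.IsBlock z) :
    P.blocks (init.flatten ++ z) = init ++ [z] := by
  rw [P.blocks_flatten_append hinit, hz.blocks_eq]

lemma length_flatten_append_le {init : List (List ℕ)} (hinit : ∀ b ∈ init, P.IsType2Block b)
    {z : List ℕ} (hz : P.IsBlock z) : (init.flatten ++ z).length ≤ P.L * (init.length + 1) := by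
  induction init with
  | nil => simpa using hz.length_le
  | cons b init ih =>
    rw [List.forall_mem_cons] at hinit
    have := hinit.1.length_le
    simp only [List.flatten_cons, List.append_assoc, List.length_append] at ih ⊢
    simp only [List.length_cons]
    nlinarith [ih hinit.2]

lemma IsLegal.le_size {P : PLRS} {l : List ℕ} (hl : P.IsLegal l) : ∀ x ∈ l, x ≤ P.size := by
  obtain ⟨init, z, hinit, hz, rfl⟩ := hl.exists_eq_flatten_append
  simp only [List.mem_append, List.mem_flatten]
  rintro x (⟨b, hb, hx⟩ | hx)
  exacts [(hinit b hb).le_size x hx, hz.le_size x hx]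

lemma headI_flatten_append {init : List (List ℕ)} (hinit : ∀ b ∈ init, P.IsType2Block b)
    (hne : init ≠ []) (r r' : List ℕ) :
    (init.flatten ++ r).headI = (init.flatten ++ r').headI := by
  obtain ⟨b, init', rfl⟩ := List.exists_cons_of_ne_nil hne
  obtain ⟨x, b', rfl⟩ := List.exists_cons_of_ne_nil (hinit _ List.mem_cons_self).ne_nil
  rfl

lemma LegalDecomp.one_lt_size {P : PLRS} {l : List ℕ} (hl : P.LegalDecomp l) : 1 < P.size := by
  obtain ⟨hleg, hhead⟩ := hl
  cases hleg with
  | cond1 m h1 h2 => exact P.one_lt_size_of_one_lt_L (by omega)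
  | cond2 s hs1 hs2 a ha
  | cond2_last s hs1 hs2 a ha =>
    rcases Nat.lt_or_ge 1 s with hs | hs
    · exact P.one_lt_size_of_one_lt_L (by omega)
    · obtain rfl : s = 1 := by omega
      simp at hhead
      exact (by omega : 1 < P.c 1).trans_le (P.c_le_size le_rfl P.L_pos)

lemma value_append (x y : List ℕ) :
    P.value (x ++ y) =
      ∑ i ∈ Finset.range x.length, x.getD i 0 * P.H (x.length + y.length - i) + P.value y := by
  rw [value, List.length_append, Finset.sum_range_add, value]
  congr 1
  · refine Finset.sum_congr rfl fun i hi => ?_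
    rw [List.getD_append _ _ _ _ (Finset.mem_range.mp hi)]
  · refine Finset.sum_congr rfl fun i _ => ?_
    rw [List.getD_append_right _ _ _ _ (Nat.le_add_right _ _), Nat.add_sub_cancel_left]
    congr 2
    omega

lemma value_cons (a : ℕ) (y : List ℕ) :
    P.value (a :: y) = a * P.H (y.length + 1) + P.value y := by
  simpa [Nat.add_comm] using P.value_append [a] y

lemma value_coeffPrefix_append (s : ℕ) (y : List ℕ) :
    P.value (P.coeffPrefix s ++ y) =
      ∑ i ∈ Finset.Icc 1 s, P.c i * P.H (s + y.length + 1 - i) + P.value y := by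
  have hterm : ∀ i ∈ Finset.range s, (P.coeffPrefix s).getD i 0 * P.H (s + y.length - i) =
      (fun j => P.c j * P.H (s + y.length + 1 - j)) (i + 1) := fun i hi => by
    rw [P.getD_coeffPrefix (Finset.mem_range.mp hi)]
    congr 2
    omega
  rw [P.value_append, P.length_coeffPrefix, Finset.sum_congr rfl hterm, Finset.range_eq_Ico,
    Finset.sum_Ico_add' (fun j => P.c j * P.H (s + y.length + 1 - j)), zero_add,
    Finset.Ico_add_one_right_eq_Icc]

lemma value_coeffPrefix_append_cons_lt {s a : ℕ} (hs1 : 1 ≤ s) (hs2 : s ≤ P.L) (ha : a < P.c s)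
    {r : List ℕ} (hr : P.value r < P.H (r.length + 1)) :
    P.value (P.coeffPrefix (s - 1) ++ a :: r) <
      P.H ((P.coeffPrefix (s - 1) ++ a :: r).length + 1) := by
  obtain ⟨t, rfl⟩ := Nat.exists_eq_add_of_le' hs1
  have hrec := P.sum_c_mul_H_le hs2 (m := t + (r.length + 1)) (by omega) (by omega)
  rw [Finset.sum_Icc_succ_top (by omega), show t + (r.length + 1) + 1 - (t + 1) = r.length + 1 by
    omega] at hrec
  have hlast := Nat.mul_le_mul_right (P.H (r.length + 1)) (Nat.succ_le_of_lt ha)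
  rw [Nat.succ_mul] at hlast
  simp only [Nat.add_sub_cancel, P.value_coeffPrefix_append, P.value_cons, List.length_append,
    List.length_cons, P.length_coeffPrefix]
  omega

lemma value_lt_H_length_succ {l : List ℕ} (hl : P.IsLegal l) :
    P.value l < P.H (l.length + 1) := by
  induction hl with
  | cond1 m h1 h2 =>
    have hv := P.value_coeffPrefix_append m []
    rw [List.append_nil] at hv
    rw [P.map_range_eq_coeffPrefix, hv, P.length_coeffPrefix, P.H_init m h1 h2]
    simp [value]
  | cond2 s hs1 hs2 a ha rest _ ih =>
    rw [P.map_range_eq_coeffPrefix]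
    exact P.value_coeffPrefix_append_cons_lt hs1 hs2 ha ih
  | cond2_last s hs1 hs2 a ha =>
    rw [P.map_range_eq_coeffPrefix]
    exact P.value_coeffPrefix_append_cons_lt hs1 hs2 ha (by simp [value, P.H_one])

lemma H_length_le_value {l : List ℕ} (hl : 0 < l.headI) : P.H l.length ≤ P.value l := by
  obtain _ | ⟨a, y⟩ := l
  · simp at hl
  · rw [P.value_cons, List.length_cons]
    exact le_add_right (Nat.le_mul_of_pos_left _ hl)

lemma finite_setOf_length_eq_forall_le (m C : ℕ) :
    {l : List ℕ | l.length = m ∧ ∀ x ∈ l, x ≤ C}.Finite := by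
  refine ((List.finite_length_eq (Fin (C + 1)) m).image (List.map Fin.val)).subset ?_
  rintro l ⟨hlen, hle⟩
  refine ⟨l.attach.map fun x => ⟨x.1, Nat.lt_succ_of_le (hle x.1 x.2)⟩, by simpa using hlen, ?_⟩
  simp

lemma finite_setOf_legalDecomp (m : ℕ) : {l | P.LegalDecomp l ∧ l.length = m}.Finite :=
  (finite_setOf_length_eq_forall_le m P.size).subset fun _ ⟨⟨hl, _⟩, hlen⟩ => ⟨hlen, hl.le_size⟩

noncomputable def decomps (m : ℕ) : Finset (List ℕ) := (P.finite_setOf_legalDecomp m).toFinset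

lemma mem_decomps {m : ℕ} {l : List ℕ} : l ∈ P.decomps m ↔ P.LegalDecomp l ∧ l.length = m :=
  Set.Finite.mem_toFinset _

lemma omega_eq_decomps (hS : 1 < P.size) {n : ℕ} (hn : 1 ≤ n) : P.Omega n = P.decomps n := by
  ext l
  rw [Finset.mem_coe, mem_decomps]
  have hmono := P.H_strictMonoOn hS
  constructor
  · rintro ⟨hl, hge, hlt⟩
    have hlen : 1 ≤ l.length := List.length_pos_iff.mpr (by rintro rfl; simp [LegalDecomp] at hl)
    have h1 := (P.H_length_le_value hl.2).trans_lt hlt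
    have h2 := hge.trans_lt (P.value_lt_H_length_succ hl.1)
    rw [hmono.lt_iff_lt hlen (by simp)] at h1
    rw [hmono.lt_iff_lt hn (by simp)] at h2
    exact ⟨hl, by omega⟩
  · rintro ⟨hl, rfl⟩
    exact ⟨hl, P.H_length_le_value hl.2, P.value_lt_H_length_succ hl.1⟩

lemma ell_eq_of_coeffSum {s t : ℕ} (hs : 1 ≤ s) (h1 : P.coeffSum (s - 1) ≤ t)
    (h2 : t < P.coeffSum s) : P.ell t = s := by
  obtain ⟨k, rfl⟩ := Nat.exists_eq_add_of_le' hs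
  refine (Nat.sInf_upward_closed_eq_succ_iff
    (fun _ _ hk h => h.trans_le (P.coeffSum_mono hk)) k).mpr ⟨h2, ?_⟩
  simpa [coeffSum] using h1

lemma ell_spec {t : ℕ} (ht : t < P.size) :
    1 ≤ P.ell t ∧ P.ell t ≤ P.L ∧ P.coeffSum (P.ell t - 1) ≤ t ∧ t < P.coeffSum (P.ell t) := by
  have hmem : t < P.coeffSum (P.ell t) := Nat.sInf_mem (s := {s | t < P.coeffSum s}) ⟨P.L, ht⟩
  have hpos : 1 ≤ P.ell t := by
    by_contra h
    simp [show P.ell t = 0 by omega, coeffSum] at hmem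
  have hprev : ¬ t < P.coeffSum (P.ell t - 1) :=
    Nat.notMem_of_lt_sInf (s := {s | t < P.coeffSum s}) (show P.ell t - 1 < P.ell t by omega)
  exact ⟨hpos, Nat.sInf_le ht, not_lt.mp hprev, hmem⟩

lemma ell_zero : P.ell 0 = 1 :=
  P.ell_eq_of_coeffSum le_rfl (by simp [coeffSum]) (by simpa [coeffSum] using P.c1_pos)

lemma type2Block_eq (t : ℕ) :
    P.type2Block t = P.coeffPrefix (P.ell t - 1) ++ [t - P.coeffSum (P.ell t - 1)] := rfl

lemma isType2Block_type2Block {t : ℕ} (ht : t < P.size) : P.IsType2Block (P.type2Block t) := by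
  obtain ⟨h1, h2, h3, h4⟩ := P.ell_spec ht
  rw [P.coeffSum_pred h1] at h4
  exact ⟨P.ell t, h1, h2, t - P.coeffSum (P.ell t - 1), by omega, rfl⟩

lemma sum_type2Block {t : ℕ} (ht : t < P.size) : (P.type2Block t).sum = t := by
  have := (P.ell_spec ht).2.2.1
  rw [type2Block_eq, List.sum_append, P.sum_coeffPrefix, List.sum_singleton]
  omega

lemma length_type2Block {t : ℕ} (ht : t < P.size) : (P.type2Block t).length = P.ell t := by
  simp [type2Block, Nat.sub_add_cancel (P.ell_spec ht).1]

namespace IsType2Block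

variable {P} {b : List ℕ}

lemma sum_lt_size (hb : P.IsType2Block b) :
    b.sum < P.size := by
  obtain ⟨s, hs1, hs2, a, ha, rfl⟩ := hb
  rw [P.map_range_eq_coeffPrefix, List.sum_append, P.sum_coeffPrefix, List.sum_singleton,
    P.size_eq_coeffSum]
  have := P.coeffSum_pred hs1
  have := P.coeffSum_mono hs2
  omega

lemma type2Block_sum (hb : P.IsType2Block b) :
    P.type2Block b.sum = b := by
  obtain ⟨s, hs1, hs2, a, ha, rfl⟩ := hb
  have hsum : ((P.coeffPrefix (s - 1)) ++ [a]).sum = P.coeffSum (s - 1) + a := by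
    simp [P.sum_coeffPrefix]
  have hell : P.ell (P.coeffSum (s - 1) + a) = s :=
    P.ell_eq_of_coeffSum hs1 le_self_add (by rw [P.coeffSum_pred hs1]; omega)
  rw [P.map_range_eq_coeffPrefix, hsum, type2Block_eq, hell, Nat.add_sub_cancel_left]

end IsType2Block

section BlockDecomposition

variable {P} {init : List (List ℕ)} {y z : List ℕ}

lemma blocks_flatten_append_append (hinit : ∀ b ∈ init, P.IsType2Block b)
    (hy : P.IsType2Block y) (hz : P.IsBlock z) :
    P.blocks (init.flatten ++ (y ++ z)) = init ++ [y, z] := by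
  have hinit' : ∀ b ∈ init ++ [y], P.IsType2Block b := by
    simpa [or_imp, forall_and] using ⟨hinit, hy⟩
  simpa using P.blocks_flatten_append_of_isBlock hinit' hz

lemma insertSTL_flatten_append (hinit : ∀ b ∈ init, P.IsType2Block b) (hz : P.IsBlock z)
    (t : ℕ) : P.insertSTL t (init.flatten ++ z) = init.flatten ++ (P.type2Block t ++ z) := by
  rw [insertSTL, P.blocks_flatten_append_of_isBlock hinit hz,
    List.reverse_insertIdx_one_reverse_concat]
  simp

lemma removeSTL_flatten_append_append (hinit : ∀ b ∈ init, P.IsType2Block b)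
    (hy : P.IsType2Block y) (hz : P.IsBlock z) :
    P.removeSTL (init.flatten ++ (y ++ z)) = init.flatten ++ z := by
  rw [removeSTL, blocks_flatten_append_append hinit hy hz,
    List.reverse_eraseIdx_one_reverse_concat]
  simp

lemma Z_flatten_append_append (hinit : ∀ b ∈ init, P.IsType2Block b)
    (hy : P.IsType2Block y) (hz : P.IsBlock z) : P.Z (init.flatten ++ (y ++ z)) = y.sum := by
  simp [Z, stlBlock, blocks_flatten_append_append hinit hy hz]

end BlockDecomposition

lemma IsLegal.exists_eq_flatten_append_append {P : PLRS} {l : List ℕ} (hl : P.IsLegal l)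
    {k : ℕ} (hlen : P.L * (k + 1) < l.length) :
    ∃ (init : List (List ℕ)) (y z : List ℕ), (∀ b ∈ init, P.IsType2Block b) ∧
      k ≤ init.length ∧ P.IsType2Block y ∧ P.IsBlock z ∧ l = init.flatten ++ (y ++ z) := by
  obtain ⟨init₀, z, hinit₀, hz, rfl⟩ := hl.exists_eq_flatten_append
  have hk : k < init₀.length := by
    by_contra h
    have := P.length_flatten_append_le hinit₀ hz
    have := Nat.mul_le_mul_left P.L (show init₀.length + 1 ≤ k + 1 by omega)
    omega
  have hne : init₀ ≠ [] := List.ne_nil_of_length_pos (by omega)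
  obtain ⟨init, y, rfl⟩ : ∃ init y, init₀ = init ++ [y] :=
    ⟨_, _, (List.dropLast_append_getLast hne).symm⟩
  simp only [List.mem_append, List.mem_singleton, or_imp, forall_and, forall_eq] at hinit₀
  simp only [List.length_append, List.length_singleton] at hk
  exact ⟨init, y, z, hinit₀.1, by omega, hinit₀.2, hz, by simp⟩

section InsertRemove

variable {P} {t : ℕ} {l : List ℕ}

lemma Z_insertSTL (ht : t < P.size) (hl : P.IsLegal l) : P.Z (P.insertSTL t l) = t := by
  obtain ⟨init, z, hinit, hz, rfl⟩ := hl.exists_eq_flatten_append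
  rw [insertSTL_flatten_append hinit hz,
    Z_flatten_append_append hinit (P.isType2Block_type2Block ht) hz, P.sum_type2Block ht]

lemma sum_insertSTL (ht : t < P.size) (hl : P.IsLegal l) :
    (P.insertSTL t l).sum = t + l.sum := by
  obtain ⟨init, z, hinit, hz, rfl⟩ := hl.exists_eq_flatten_append
  rw [insertSTL_flatten_append hinit hz]
  simp only [List.sum_append, P.sum_type2Block ht]
  omega

lemma removeSTL_insertSTL (ht : t < P.size) (hl : P.IsLegal l) :
    P.removeSTL (P.insertSTL t l) = l := by
  obtain ⟨init, z, hinit, hz, rfl⟩ := hl.exists_eq_flatten_append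
  rw [insertSTL_flatten_append hinit hz,
    removeSTL_flatten_append_append hinit (P.isType2Block_type2Block ht) hz]

lemma insertSTL_mem_decomps (ht : t < P.size) {m : ℕ} (hm : P.L < m) (hl : l ∈ P.decomps m) :
    P.insertSTL t l ∈ P.decomps (m + P.ell t) := by
  obtain ⟨⟨hleg, hhead⟩, rfl⟩ := P.mem_decomps.mp hl
  obtain ⟨init, z, hinit, hz, rfl⟩ := hleg.exists_eq_flatten_append
  have hne : init ≠ [] := by
    rintro rfl
    have := hz.length_le
    simp at hm
    omega
  have hB := P.isType2Block_type2Block ht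
  rw [P.mem_decomps, insertSTL_flatten_append hinit hz]
  refine ⟨⟨P.isLegal_flatten_append hinit (hB.isLegal_append hz.isLegal), ?_⟩, ?_⟩
  · rwa [P.headI_flatten_append hinit hne _ z]
  · simp [P.length_type2Block ht]
    omega

lemma Z_lt_size (hl : P.IsLegal l) (hlen : P.L < l.length) : P.Z l < P.size := by
  obtain ⟨init, y, z, hinit, -, hy, hz, rfl⟩ :=
    hl.exists_eq_flatten_append_append (k := 0) (by simpa using hlen)
  rw [Z_flatten_append_append hinit hy hz]
  exact hy.sum_lt_size

lemma insertSTL_removeSTL (hl : P.IsLegal l) (hlen : P.L < l.length) :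
    P.insertSTL (P.Z l) (P.removeSTL l) = l := by
  obtain ⟨init, y, z, hinit, -, hy, hz, rfl⟩ :=
    hl.exists_eq_flatten_append_append (k := 0) (by simpa using hlen)
  rw [Z_flatten_append_append hinit hy hz, removeSTL_flatten_append_append hinit hy hz,
    insertSTL_flatten_append hinit hz, hy.type2Block_sum]

lemma removeSTL_mem_decomps {n : ℕ} (hn : 2 * P.L < n) (hl : l ∈ P.decomps n) :
    P.removeSTL l ∈ P.decomps (n - P.ell (P.Z l)) := by
  obtain ⟨⟨hleg, hhead⟩, rfl⟩ := P.mem_decomps.mp hl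
  obtain ⟨init, y, z, hinit, hk, hy, hz, rfl⟩ :=
    hleg.exists_eq_flatten_append_append (k := 1) (by omega)
  have hne : init ≠ [] := List.ne_nil_of_length_pos hk
  have hylen : y.length = P.ell y.sum := by
    rw [← P.length_type2Block hy.sum_lt_size, hy.type2Block_sum]
  rw [Z_flatten_append_append hinit hy hz, removeSTL_flatten_append_append hinit hy hz,
    P.mem_decomps]
  refine ⟨⟨P.isLegal_flatten_append hinit hz.isLegal, ?_⟩, ?_⟩
  · rwa [P.headI_flatten_append hinit hne z (y ++ z)]
  · simp [hylen]
    omega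

end InsertRemove

lemma sum_decomps_eq_sum_sum_insertSTL {M : Type*} [AddCommMonoid M] {n : ℕ}
    (hn : 2 * P.L < n) (g : List ℕ → M) :
    ∑ l ∈ P.decomps n, g l =
      ∑ t ∈ Finset.range P.size, ∑ l ∈ P.decomps (n - P.ell t), g (P.insertSTL t l) := by
  have hmaps : ∀ l ∈ P.decomps n, P.Z l ∈ Finset.range P.size := fun l hl => by
    obtain ⟨⟨hleg, -⟩, rfl⟩ := P.mem_decomps.mp hl
    exact Finset.mem_range.mpr (Z_lt_size hleg (by omega))
  rw [← Finset.sum_fiberwise_of_maps_to hmaps]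
  refine Finset.sum_congr rfl fun t ht => ?_
  rw [Finset.mem_range] at ht
  have hell := (P.ell_spec ht).2.1
  symm
  refine Finset.sum_nbij' (P.insertSTL t) P.removeSTL (fun l hl => ?_) (fun l hl => ?_)
    (fun l hl => removeSTL_insertSTL ht (P.mem_decomps.mp hl).1.1) (fun l hl => ?_)
    (fun _ _ => rfl)
  · have hmem := insertSTL_mem_decomps ht (m := n - P.ell t) (by omega) hl
    rw [Nat.sub_add_cancel (by omega)] at hmem
    exact Finset.mem_filter.mpr ⟨hmem, Z_insertSTL ht (P.mem_decomps.mp hl).1.1⟩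
  · obtain ⟨hmem, rfl⟩ := Finset.mem_filter.mp hl
    exact removeSTL_mem_decomps hn hmem
  · obtain ⟨hmem, rfl⟩ := Finset.mem_filter.mp hl
    obtain ⟨⟨hleg, -⟩, rfl⟩ := P.mem_decomps.mp hmem
    exact insertSTL_removeSTL hleg (by omega)

lemma card_decomps_eq_sum {n : ℕ} (hn : 2 * P.L < n) :
    (P.decomps n).card = ∑ t ∈ Finset.range P.size, (P.decomps (n - P.ell t)).card := by
  simpa using P.sum_decomps_eq_sum_sum_insertSTL (M := ℕ) hn fun _ => 1

lemma sum_decomps_comp_Z {n : ℕ} (hn : 2 * P.L < n) (h : ℕ → ℝ) :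
    ∑ l ∈ P.decomps n, h (P.Z l) =
      ∑ t ∈ Finset.range P.size, (P.decomps (n - P.ell t)).card * h t := by
  rw [P.sum_decomps_eq_sum_sum_insertSTL hn]
  refine Finset.sum_congr rfl fun t ht => ?_
  rw [Finset.sum_congr rfl fun l hl =>
      congrArg h (Z_insertSTL (Finset.mem_range.mp ht) (P.mem_decomps.mp hl).1.1),
    Finset.sum_const, nsmul_eq_mul]

lemma sum_listSum_decomps {n : ℕ} (hn : 2 * P.L < n) :
    ∑ l ∈ P.decomps n, (l.sum : ℝ) =
      ∑ t ∈ Finset.range P.size, ∑ l ∈ P.decomps (n - P.ell t), ((t : ℝ) + l.sum) := by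
  rw [P.sum_decomps_eq_sum_sum_insertSTL hn]
  refine Finset.sum_congr rfl fun t ht => Finset.sum_congr rfl fun l hl => ?_
  rw [sum_insertSTL (Finset.mem_range.mp ht) (P.mem_decomps.mp hl).1.1]
  push_cast
  rfl

lemma card_decomps_le_card_decomps_succ {m : ℕ} (hm : P.L < m) :
    (P.decomps m).card ≤ (P.decomps (m + 1)).card := by
  have h0 : 0 < P.size := P.c1_pos.trans_le (P.c_le_size le_rfl P.L_pos)
  refine Finset.card_le_card_of_injOn (P.insertSTL 0) (fun l hl => ?_) fun l₁ h₁ l₂ h₂ he => ?_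
  · simpa [P.ell_zero] using insertSTL_mem_decomps h0 hm hl
  · rw [← removeSTL_insertSTL h0 (P.mem_decomps.mp h₁).1.1, he,
      removeSTL_insertSTL h0 (P.mem_decomps.mp h₂).1.1]

lemma card_decomps_mono {m m' : ℕ} (hm : P.L < m) (hmm' : m ≤ m') :
    (P.decomps m).card ≤ (P.decomps m').card := by
  induction m', hmm' using Nat.le_induction with
  | base => exact le_rfl
  | succ k hk ih => exact ih.trans (P.card_decomps_le_card_decomps_succ (by omega))

section Moments

variable {P} {a b : ℝ} {f : ℕ → ℝ}

lemma sum_listSum_decomps_eq_card_mul (hS : 1 < P.size)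
    (hf : ∀ r : ℕ, P.L < r → P.expectK r = a * (r : ℝ) + b + f r) {m : ℕ} (hm : P.L < m) :
    ∑ l ∈ P.decomps m, (l.sum : ℝ) = (P.decomps m).card * (a * m + b + f m) := by
  rw [sum_eq_card_mul_expectOn, ← P.omega_eq_decomps hS (by omega), ← hf m hm]
  rfl

lemma sum_decomps_Y_eq (hS : 1 < P.size)
    (hf : ∀ r : ℕ, P.L < r → P.expectK r = a * (r : ℝ) + b + f r) {n : ℕ} (hn : 2 * P.L < n) :
    ∑ l ∈ P.decomps n, ((P.Z l : ℝ) + f (n - P.Lfn l) - a * (P.Lfn l : ℝ)) =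
      (P.decomps n).card * f n := by
  have hterm : ∀ t ∈ Finset.range P.size,
      ((P.decomps (n - P.ell t)).card : ℝ) * (t + f (n - P.ell t) - a * P.ell t) =
        ∑ l ∈ P.decomps (n - P.ell t), ((t : ℝ) + l.sum) -
          (P.decomps (n - P.ell t)).card * (a * n + b) := fun t ht => by
    have hell := (P.ell_spec (Finset.mem_range.mp ht)).2.1
    rw [Finset.sum_add_distrib, P.sum_listSum_decomps_eq_card_mul hS hf (by omega),
      Finset.sum_const, nsmul_eq_mul, Nat.cast_sub (by omega)]
    ring
  calc ∑ l ∈ P.decomps n, ((P.Z l : ℝ) + f (n - P.Lfn l) - a * (P.Lfn l : ℝ))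
      = ∑ t ∈ Finset.range P.size,
          ((P.decomps (n - P.ell t)).card : ℝ) * (t + f (n - P.ell t) - a * P.ell t) :=
        P.sum_decomps_comp_Z hn fun t => t + f (n - P.ell t) - a * P.ell t
    _ = ∑ l ∈ P.decomps n, (l.sum : ℝ) - (P.decomps n).card * (a * n + b) := by
        rw [Finset.sum_congr rfl hterm, Finset.sum_sub_distrib, ← P.sum_listSum_decomps hn,
          ← Finset.sum_mul, P.card_decomps_eq_sum hn]
        push_cast
        rfl
    _ = (P.decomps n).card * f n := by
        rw [P.sum_listSum_decomps_eq_card_mul hS hf (by omega)]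
        ring

lemma var_Y_ge (hS : 1 < P.size)
    (hf : ∀ r : ℕ, P.L < r → P.expectK r = a * (r : ℝ) + b + f r) {n : ℕ} (hn : 2 * P.L < n)
    (hne : (P.Omega n).Nonempty) :
    (f (n - 1) - a) ^ 2 / P.size - f n ^ 2 ≤
      varOn (P.Omega n) (fun l => (P.Z l : ℝ) + f (n - P.Lfn l) - a * (P.Lfn l : ℝ)) := by
  rw [P.omega_eq_decomps hS (by omega)] at hne ⊢
  set w : ℕ → ℝ := fun t => (P.decomps (n - P.ell t)).card
  set y : ℕ → ℝ := fun t => t + f (n - P.ell t) - a * P.ell t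
  have hcard : ((P.decomps n).card : ℝ) = ∑ t ∈ Finset.range P.size, w t := by
    rw [P.card_decomps_eq_sum hn]
    push_cast
    rfl
  have hcard_pos : (0 : ℝ) < (P.decomps n).card := by
    exact_mod_cast (Finset.coe_nonempty.mp hne).card_pos
  have hsq : ∑ l ∈ P.decomps n, ((P.Z l : ℝ) + f (n - P.Lfn l) - a * (P.Lfn l : ℝ)) ^ 2 =
      ∑ t ∈ Finset.range P.size, w t * y t ^ 2 :=
    P.sum_decomps_comp_Z hn fun t => y t ^ 2
  have hmax : ∀ t ∈ Finset.range P.size, w t ≤ w 0 := fun t ht => by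
    have hell := P.ell_spec (Finset.mem_range.mp ht)
    simp only [w, P.ell_zero]
    exact_mod_cast P.card_decomps_mono (by omega) (by omega)
  have hpos : 0 < ∑ t ∈ Finset.range P.size, w t := by
    rwa [← hcard]
  have hbound := sq_div_card_le_sum_mul_sq_div_sum (y := y)
    (Finset.mem_range.mpr (by omega)) (fun t _ => Nat.cast_nonneg _) hmax hpos
  have hy0 : y 0 = f (n - 1) - a := by simp [y, P.ell_zero]
  rw [varOn, expectOn_coe_finset, expectOn_coe_finset, P.sum_decomps_Y_eq hS hf hn, hsq,
    mul_div_cancel_left₀ _ hcard_pos.ne', hcard]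
  rw [hy0, Finset.card_range] at hbound
  linarith

end Moments

lemma eventually_omega_nonempty {a b : ℝ} (ha : 0 < a) {f : ℕ → ℝ}
    (hf : ∀ r : ℕ, P.L < r → P.expectK r = a * (r : ℝ) + b + f r)
    (hf0 : Tendsto f atTop (nhds 0)) : ∀ᶠ n in atTop, (P.Omega n).Nonempty := by
  have hlin : Tendsto (fun n : ℕ => a * n + b + f n) atTop atTop :=
    ((tendsto_natCast_atTop_atTop.const_mul_atTop ha).atTop_add tendsto_const_nhds).atTop_add hf0
  filter_upwards [hlin.eventually_gt_atTop 0, eventually_gt_atTop P.L] with n hpos hn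
  by_contra hemp
  rw [Set.not_nonempty_iff_eq_empty] at hemp
  have hzero : P.expectK n = 0 := by simp [expectK, expect, expectOn, hemp]
  linarith [hf n hn]

end PLRS

/-- If `E[K_r] = a·r + b + f r` for `r > L`, with `a > 0` and `f → 0`, then
there is `N > 2L` such that `Var[Y_n] > a²/(2S)` for all `n > N`, where
`Y_n ω = Z_n ω + f(n - L_n ω) - a·L_n ω`. -/
theorem var_Y_lower (P : PLRS) (a b : ℝ) (ha : 0 < a) (f : ℕ → ℝ)
    (hf : ∀ r : ℕ, P.L < r → P.expectK r = a * (r : ℝ) + b + f r)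
    (hf0 : Filter.Tendsto f Filter.atTop (nhds 0)) :
    ∃ N : ℕ, 2 * P.L < N ∧ ∀ n : ℕ, N < n →
      a ^ 2 / (2 * (P.size : ℝ)) <
        varOn (P.Omega n) (fun l => (P.Z l : ℝ) + f (n - P.Lfn l) - a * (P.Lfn l : ℝ)) := by
  have hne := P.eventually_omega_nonempty ha hf hf0
  have hS : 1 < P.size := by
    obtain ⟨n, l, hl⟩ := hne.exists
    exact hl.1.one_lt_size
  have hSpos : (0 : ℝ) < P.size := by exact_mod_cast zero_lt_one.trans hS
  have hlim : Tendsto (fun n : ℕ => (f (n - 1) - a) ^ 2 / P.size - f n ^ 2) atTop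
      (nhds (a ^ 2 / P.size)) := by
    have hshift : Tendsto (fun n : ℕ => f (n - 1)) atTop (nhds 0) :=
      hf0.comp (tendsto_sub_atTop_nat 1)
    simpa using (((hshift.sub_const a).pow 2).div_const (P.size : ℝ)).sub (hf0.pow 2)
  have hlt : a ^ 2 / (2 * (P.size : ℝ)) < a ^ 2 / P.size := by
    gcongr
    linarith
  obtain ⟨N, hN⟩ := eventually_atTop.mp (hne.and (hlim.eventually (lt_mem_nhds hlt)))
  refine ⟨max N (2 * P.L) + 1, by omega, fun n hn => ?_⟩
  obtain ⟨hne_n, hlt_n⟩ := hN n (by omega)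
  exact hlt_n.trans_le (P.var_Y_ge hS hf (by omega) hne_n)
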